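/- Consider the path network with node set {s, s', u, v, t', t}, arcs (s,s'), (s',u), (u,v), (v,t'), (t',t), resistances β_{(s,s')} = β_{(t',t)} = 27 + 18·√2 and β = 1 on the three middle arcs, and potential interval [0,4]. Then: (i) the maximum value of a feasible stationary gas s-t-flow equals √((76 − 48√2)/219); and (ii) there exists a feasible 3-stage gas s-t-flow of value 2 − √2, which strictly exceeds 3·√((76 − 48√2)/219). Consequently, every optimal solution of the maximum 3-stage gas s-t-flow problem on this network is instationary. -/
import Mathlib


open Finset

/-- The stationary gas flow induced by node potentials `π` and resistances `β`
(Weymouth's equation). -/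
noncomputable def inducedFlow {V : Type*} (β : V × V → ℝ) (π : V → ℝ) (a : V × V) : ℝ :=
  Real.sign (π a.1 - π a.2) * Real.sqrt (|π a.1 - π a.2| / β a)

/-- The node balance (outflow minus inflow) at node `v` of the stationary gas flow
induced by `π`. -/
noncomputable def balance {V : Type*} [DecidableEq V] (A : Finset (V × V))
    (β : V × V → ℝ) (π : V → ℝ) (v : V) : ℝ :=
  (∑ a ∈ A.filter (fun a => a.1 = v), inducedFlow β π a) -
    (∑ a ∈ A.filter (fun a => a.2 = v), inducedFlow β π a)

/-- The arcs of the path network `s = 0 → s' = 1 → u = 2 → v = 3 → t' = 4 → t = 5`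
of Example 2. -/
def pathArcs : Finset (Fin 6 × Fin 6) := {(0, 1), (1, 2), (2, 3), (3, 4), (4, 5)}

/-- The resistances of Example 2: `27 + 18√2` on the two outer arcs, `1` elsewhere. -/
noncomputable def exResistance : Fin 6 × Fin 6 → ℝ := fun a =>
  if a = (0, 1) ∨ a = (4, 5) then 27 + 18 * Real.sqrt 2 else 1

/-- Supplies/demands of an s-t-flow of value `q`: `q` at `s = 0`, `-q` at `t = 5`. -/
def stBalance (q : ℝ) : Fin 6 → ℝ := fun v => if v = 0 then q else if v = 5 then -q else 0

/-- A potential vector is feasible if all potentials lie in `[0, 4]`. -/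
def feasible (π : Fin 6 → ℝ) : Prop := ∀ v : Fin 6, 0 ≤ π v ∧ π v ≤ 4

/-- The set of values of feasible stationary gas s-t-flows in Example 2. -/
def statValues : Set ℝ :=
  {q : ℝ | ∃ π : Fin 6 → ℝ, feasible π ∧
    ∀ v : Fin 6, balance pathArcs exResistance π v = stBalance q v}

/-- The set of values of feasible 3-stage gas s-t-flows in Example 2. -/
def threeStageValues : Set ℝ :=
  {q : ℝ | ∃ π₁ π₂ π₃ : Fin 6 → ℝ, feasible π₁ ∧ feasible π₂ ∧ feasible π₃ ∧
    ∀ v : Fin 6,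
      balance pathArcs exResistance π₁ v + balance pathArcs exResistance π₂ v +
        balance pathArcs exResistance π₃ v = stBalance q v}

-- ### auxiliary lemmas


lemma inducedFlow_eq_of {V : Type*} (β : V × V → ℝ) (π : V → ℝ) (a : V × V) (f : ℝ)
    (hb : 0 < β a) (hf : 0 ≤ f) (h : π a.1 - π a.2 = β a * f ^ 2) :
    inducedFlow β π a = f := by
  unfold inducedFlow
  rcases eq_or_lt_of_le hf with h0 | h0
  · have hz : π a.1 - π a.2 = 0 := by rw [h, ← h0]; ring
    rw [hz]; simp [← h0]
  · have hd : 0 < π a.1 - π a.2 := by rw [h]; positivity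
    rw [Real.sign_of_pos hd, abs_of_pos hd, h, one_mul,
      mul_div_cancel_left₀ _ (ne_of_gt hb), Real.sqrt_sq hf]

lemma inducedFlow_eq_neg_of {V : Type*} (β : V × V → ℝ) (π : V → ℝ) (a : V × V) (f : ℝ)
    (hb : 0 < β a) (hf : 0 ≤ f) (h : π a.1 - π a.2 = -(β a * f ^ 2)) :
    inducedFlow β π a = -f := by
  unfold inducedFlow
  rcases eq_or_lt_of_le hf with h0 | h0
  · have hz : π a.1 - π a.2 = 0 := by rw [h, ← h0]; ring
    rw [hz, ← h0]; simp
  · have hd : π a.1 - π a.2 < 0 := by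
      rw [h, neg_lt, neg_zero]; positivity
    rw [Real.sign_of_neg hd, abs_of_neg hd, h, neg_neg,
      mul_div_cancel_left₀ _ (ne_of_gt hb), Real.sqrt_sq hf]
    ring

lemma drop_of_inducedFlow_pos {V : Type*} (β : V × V → ℝ) (π : V → ℝ) (a : V × V) (f : ℝ)
    (hb : 0 < β a) (hf : 0 < f) (h : inducedFlow β π a = f) :
    π a.1 - π a.2 = β a * f ^ 2 := by
  unfold inducedFlow at h
  rcases lt_trichotomy (π a.1 - π a.2) 0 with hd | hd | hd
  · rw [Real.sign_of_neg hd] at h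
    nlinarith [Real.sqrt_nonneg (|π a.1 - π a.2| / β a)]
  · rw [hd] at h; simp at h; nlinarith
  · rw [Real.sign_of_pos hd, one_mul, abs_of_pos hd] at h
    have h2 : (π a.1 - π a.2) / β a = f ^ 2 := by
      rw [← h, Real.sq_sqrt (div_nonneg hd.le hb.le)]
    field_simp at h2
    linarith [h2]

-- balance at each node

lemma bal0 (β : Fin 6 × Fin 6 → ℝ) (π : Fin 6 → ℝ) :
    balance pathArcs β π 0 = inducedFlow β π (0, 1) := by
  have h1 : pathArcs.filter (fun a => a.1 = (0 : Fin 6)) = {((0 : Fin 6), (1 : Fin 6))} := by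
    decide
  have h2 : pathArcs.filter (fun a => a.2 = (0 : Fin 6)) = ∅ := by decide
  simp [balance, h1, h2]

lemma bal1 (β : Fin 6 × Fin 6 → ℝ) (π : Fin 6 → ℝ) :
    balance pathArcs β π 1 = inducedFlow β π (1, 2) - inducedFlow β π (0, 1) := by
  have h1 : pathArcs.filter (fun a => a.1 = (1 : Fin 6)) = {((1 : Fin 6), (2 : Fin 6))} := by
    decide
  have h2 : pathArcs.filter (fun a => a.2 = (1 : Fin 6)) = {((0 : Fin 6), (1 : Fin 6))} := by
    decide
  simp [balance, h1, h2]

lemma bal2 (β : Fin 6 × Fin 6 → ℝ) (π : Fin 6 → ℝ) :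
    balance pathArcs β π 2 = inducedFlow β π (2, 3) - inducedFlow β π (1, 2) := by
  have h1 : pathArcs.filter (fun a => a.1 = (2 : Fin 6)) = {((2 : Fin 6), (3 : Fin 6))} := by
    decide
  have h2 : pathArcs.filter (fun a => a.2 = (2 : Fin 6)) = {((1 : Fin 6), (2 : Fin 6))} := by
    decide
  simp [balance, h1, h2]

lemma bal3 (β : Fin 6 × Fin 6 → ℝ) (π : Fin 6 → ℝ) :
    balance pathArcs β π 3 = inducedFlow β π (3, 4) - inducedFlow β π (2, 3) := by
  have h1 : pathArcs.filter (fun a => a.1 = (3 : Fin 6)) = {((3 : Fin 6), (4 : Fin 6))} := by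
    decide
  have h2 : pathArcs.filter (fun a => a.2 = (3 : Fin 6)) = {((2 : Fin 6), (3 : Fin 6))} := by
    decide
  simp [balance, h1, h2]

lemma bal4 (β : Fin 6 × Fin 6 → ℝ) (π : Fin 6 → ℝ) :
    balance pathArcs β π 4 = inducedFlow β π (4, 5) - inducedFlow β π (3, 4) := by
  have h1 : pathArcs.filter (fun a => a.1 = (4 : Fin 6)) = {((4 : Fin 6), (5 : Fin 6))} := by
    decide
  have h2 : pathArcs.filter (fun a => a.2 = (4 : Fin 6)) = {((3 : Fin 6), (4 : Fin 6))} := by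
    decide
  simp [balance, h1, h2]

lemma bal5 (β : Fin 6 × Fin 6 → ℝ) (π : Fin 6 → ℝ) :
    balance pathArcs β π 5 = -inducedFlow β π (4, 5) := by
  have h1 : pathArcs.filter (fun a => a.1 = (5 : Fin 6)) = ∅ := by decide
  have h2 : pathArcs.filter (fun a => a.2 = (5 : Fin 6)) = {((4 : Fin 6), (5 : Fin 6))} := by
    decide
  simp [balance, h1, h2]

lemma res01 : exResistance (0, 1) = 27 + 18 * Real.sqrt 2 := by
  simp [exResistance]

lemma res45 : exResistance (4, 5) = 27 + 18 * Real.sqrt 2 := by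
  simp [exResistance]

lemma res12 : exResistance (1, 2) = 1 := by
  rw [exResistance, if_neg (by decide)]

lemma res23 : exResistance (2, 3) = 1 := by
  rw [exResistance, if_neg (by decide)]

lemma res34 : exResistance (3, 4) = 1 := by
  rw [exResistance, if_neg (by decide)]

-- numeric groundwork
lemma s2_sq : Real.sqrt 2 ^ 2 = 2 := Real.sq_sqrt (by norm_num)
lemma s2_nonneg : 0 ≤ Real.sqrt 2 := Real.sqrt_nonneg 2
lemma s2_lt : Real.sqrt 2 < 3 / 2 := by nlinarith [s2_sq, s2_nonneg]
lemma T_pos : 0 < 57 + 36 * Real.sqrt 2 := by nlinarith [s2_nonneg]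
lemma beta_pos : (0 : ℝ) < 27 + 18 * Real.sqrt 2 := by nlinarith [s2_nonneg]

lemma Q_sq : Real.sqrt ((76 - 48 * Real.sqrt 2) / 219) ^ 2 = 4 / (57 + 36 * Real.sqrt 2) := by
  have h1 : (0 : ℝ) ≤ (76 - 48 * Real.sqrt 2) / 219 := by nlinarith [s2_lt, s2_nonneg]
  rw [Real.sq_sqrt h1]
  rw [div_eq_div_iff (by norm_num) (ne_of_gt T_pos)]
  nlinarith [s2_sq]

lemma Q_nonneg : 0 ≤ Real.sqrt ((76 - 48 * Real.sqrt 2) / 219) := Real.sqrt_nonneg _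

-- the stationary optimal potential
noncomputable def statPi : Fin 6 → ℝ := fun v =>
  if v = 0 then 4
  else if v = 1 then (120 + 72 * Real.sqrt 2) / (57 + 36 * Real.sqrt 2)
  else if v = 2 then (116 + 72 * Real.sqrt 2) / (57 + 36 * Real.sqrt 2)
  else if v = 3 then (112 + 72 * Real.sqrt 2) / (57 + 36 * Real.sqrt 2)
  else if v = 4 then (108 + 72 * Real.sqrt 2) / (57 + 36 * Real.sqrt 2)
  else 0

lemma statPi_feasible : feasible statPi := by
  intro v
  fin_cases v <;> simp [statPi, Fin.reduceEq] <;>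
    constructor <;>
    [positivity; rw [div_le_iff₀ T_pos]; positivity; rw [div_le_iff₀ T_pos];
     positivity; rw [div_le_iff₀ T_pos]; positivity; rw [div_le_iff₀ T_pos]] <;>
    nlinarith [s2_nonneg]

lemma stat_mem : Real.sqrt ((76 - 48 * Real.sqrt 2) / 219) ∈ statValues := by
  set Q := Real.sqrt ((76 - 48 * Real.sqrt 2) / 219) with hQ
  refine ⟨statPi, statPi_feasible, ?_⟩
  have f01 : inducedFlow exResistance statPi (0, 1) = Q := by
    apply inducedFlow_eq_of _ _ _ _ (by rw [res01]; exact beta_pos) Q_nonneg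
    rw [res01, Q_sq]
    show (4 : ℝ) - (120 + 72 * Real.sqrt 2) / (57 + 36 * Real.sqrt 2) = _
    field_simp
    ring
  have f12 : inducedFlow exResistance statPi (1, 2) = Q := by
    apply inducedFlow_eq_of _ _ _ _ (by rw [res12]; norm_num) Q_nonneg
    rw [res12, Q_sq]
    show (120 + 72 * Real.sqrt 2) / (57 + 36 * Real.sqrt 2) -
      (116 + 72 * Real.sqrt 2) / (57 + 36 * Real.sqrt 2) = _
    rw [div_sub_div_same]; ring_nf
  have f23 : inducedFlow exResistance statPi (2, 3) = Q := by
    apply inducedFlow_eq_of _ _ _ _ (by rw [res23]; norm_num) Q_nonneg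
    rw [res23, Q_sq]
    show (116 + 72 * Real.sqrt 2) / (57 + 36 * Real.sqrt 2) -
      (112 + 72 * Real.sqrt 2) / (57 + 36 * Real.sqrt 2) = _
    rw [div_sub_div_same]; ring_nf
  have f34 : inducedFlow exResistance statPi (3, 4) = Q := by
    apply inducedFlow_eq_of _ _ _ _ (by rw [res34]; norm_num) Q_nonneg
    rw [res34, Q_sq]
    show (112 + 72 * Real.sqrt 2) / (57 + 36 * Real.sqrt 2) -
      (108 + 72 * Real.sqrt 2) / (57 + 36 * Real.sqrt 2) = _
    rw [div_sub_div_same]; ring_nf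
  have f45 : inducedFlow exResistance statPi (4, 5) = Q := by
    apply inducedFlow_eq_of _ _ _ _ (by rw [res45]; exact beta_pos) Q_nonneg
    rw [res45, Q_sq]
    show (108 + 72 * Real.sqrt 2) / (57 + 36 * Real.sqrt 2) - 0 = _
    field_simp
    ring
  intro v
  fin_cases v
  · show balance pathArcs exResistance statPi 0 = stBalance Q 0
    rw [bal0, f01]; simp [stBalance]
  · show balance pathArcs exResistance statPi 1 = stBalance Q 1
    rw [bal1, f01, f12]; simp [stBalance, Fin.reduceEq]
  · show balance pathArcs exResistance statPi 2 = stBalance Q 2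
    rw [bal2, f12, f23]; simp [stBalance, Fin.reduceEq]
  · show balance pathArcs exResistance statPi 3 = stBalance Q 3
    rw [bal3, f23, f34]; simp [stBalance, Fin.reduceEq]
  · show balance pathArcs exResistance statPi 4 = stBalance Q 4
    rw [bal4, f34, f45]; simp [stBalance, Fin.reduceEq]
  · show balance pathArcs exResistance statPi 5 = stBalance Q 5
    rw [bal5, f45]; simp [stBalance, Fin.reduceEq]

lemma stat_ub : ∀ q ∈ statValues, q ≤ Real.sqrt ((76 - 48 * Real.sqrt 2) / 219) := by
  rintro q ⟨π, hfeas, hbal⟩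
  set Q := Real.sqrt ((76 - 48 * Real.sqrt 2) / 219) with hQ
  have h0 := hbal 0; rw [bal0] at h0
  have h1 := hbal 1; rw [bal1] at h1
  have h2 := hbal 2; rw [bal2] at h2
  have h3 := hbal 3; rw [bal3] at h3
  simp only [stBalance, Fin.reduceEq, if_true, if_false, reduceIte] at h0 h1 h2 h3
  have f01 : inducedFlow exResistance π (0, 1) = q := h0
  have f12 : inducedFlow exResistance π (1, 2) = q := by linarith
  have f23 : inducedFlow exResistance π (2, 3) = q := by linarith
  have f34 : inducedFlow exResistance π (3, 4) = q := by linarith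
  have f45 : inducedFlow exResistance π (4, 5) = q := by
    have h4 := hbal 4; rw [bal4] at h4
    simp only [stBalance, Fin.reduceEq, if_true, if_false, reduceIte] at h4
    linarith
  rcases le_or_gt q 0 with hq | hq
  · exact hq.trans Q_nonneg
  · have d01 := drop_of_inducedFlow_pos _ _ _ _ (by rw [res01]; exact beta_pos) hq f01
    have d12 := drop_of_inducedFlow_pos _ _ _ _ (by rw [res12]; norm_num) hq f12
    have d23 := drop_of_inducedFlow_pos _ _ _ _ (by rw [res23]; norm_num) hq f23
    have d34 := drop_of_inducedFlow_pos _ _ _ _ (by rw [res34]; norm_num) hq f34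
    have d45 := drop_of_inducedFlow_pos _ _ _ _ (by rw [res45]; exact beta_pos) hq f45
    rw [res01] at d01; rw [res12] at d12; rw [res23] at d23; rw [res34] at d34
    rw [res45] at d45
    simp only at d01 d12 d23 d34 d45
    have hπ0 : π 0 ≤ 4 := (hfeas 0).2
    have hπ5 : 0 ≤ π 5 := (hfeas 5).1
    have hsum : (57 + 36 * Real.sqrt 2) * q ^ 2 ≤ 4 := by nlinarith
    have hqsq : q ^ 2 ≤ Q ^ 2 := by
      rw [Q_sq, le_div_iff₀ T_pos]; linarith
    nlinarith [Q_nonneg]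

-- the three-stage potentials
noncomputable def pi1 : Fin 6 → ℝ := fun v =>
  if v = 0 then 4 else if v = 1 then 2 else if v = 2 then 1
  else if v = 3 then 0 else if v = 4 then 2 else 0

noncomputable def pi2 : Fin 6 → ℝ := fun v =>
  if v = 0 then 4 else if v = 1 then 2 else if v = 2 then 1
  else if v = 3 then 3 else if v = 4 then 2 else 0

noncomputable def pi3 : Fin 6 → ℝ := fun v =>
  if v = 0 then 4 else if v = 1 then 2 else if v = 2 then 4
  else if v = 3 then 3 else if v = 4 then 2 else 0

lemma outer_flow (π : Fin 6 → ℝ) (a : Fin 6 × Fin 6)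
    (hres : exResistance a = 27 + 18 * Real.sqrt 2)
    (h : π a.1 - π a.2 = 2) :
    inducedFlow exResistance π a = (2 - Real.sqrt 2) / 3 := by
  apply inducedFlow_eq_of _ _ _ _ (by rw [hres]; exact beta_pos)
    (by nlinarith [s2_lt, s2_nonneg])
  rw [hres, h]
  nlinarith [s2_sq]

lemma mid_flow_one (π : Fin 6 → ℝ) (a : Fin 6 × Fin 6)
    (hres : exResistance a = 1) (h : π a.1 - π a.2 = 1) :
    inducedFlow exResistance π a = 1 := by
  apply inducedFlow_eq_of _ _ _ _ (by rw [hres]; norm_num) (by norm_num)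
  rw [hres, h]; norm_num

lemma mid_flow_negs (π : Fin 6 → ℝ) (a : Fin 6 × Fin 6)
    (hres : exResistance a = 1) (h : π a.1 - π a.2 = -2) :
    inducedFlow exResistance π a = -Real.sqrt 2 := by
  apply inducedFlow_eq_neg_of _ _ _ _ (by rw [hres]; norm_num) s2_nonneg
  rw [hres, h, s2_sq]; norm_num

lemma three_mem : (2 - Real.sqrt 2) ∈ threeStageValues := by
  refine ⟨pi1, pi2, pi3, ?_, ?_, ?_, ?_⟩
  · intro v; fin_cases v <;> simp [pi1, Fin.reduceEq] <;> norm_num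
  · intro v; fin_cases v <;> simp [pi2, Fin.reduceEq] <;> norm_num
  · intro v; fin_cases v <;> simp [pi3, Fin.reduceEq] <;> norm_num
  · have a1_01 := outer_flow pi1 (0, 1) res01 (by simp only [pi1, Fin.reduceEq, reduceIte]; norm_num)
    have a2_01 := outer_flow pi2 (0, 1) res01 (by simp only [pi2, Fin.reduceEq, reduceIte]; norm_num)
    have a3_01 := outer_flow pi3 (0, 1) res01 (by simp only [pi3, Fin.reduceEq, reduceIte]; norm_num)
    have a1_45 := outer_flow pi1 (4, 5) res45 (by simp only [pi1, Fin.reduceEq, reduceIte]; norm_num)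
    have a2_45 := outer_flow pi2 (4, 5) res45 (by simp only [pi2, Fin.reduceEq, reduceIte]; norm_num)
    have a3_45 := outer_flow pi3 (4, 5) res45 (by simp only [pi3, Fin.reduceEq, reduceIte]; norm_num)
    have a1_12 := mid_flow_one pi1 (1, 2) res12 (by simp only [pi1, Fin.reduceEq, reduceIte]; norm_num)
    have a2_12 := mid_flow_one pi2 (1, 2) res12 (by simp only [pi2, Fin.reduceEq, reduceIte]; norm_num)
    have a3_12 := mid_flow_negs pi3 (1, 2) res12 (by simp only [pi3, Fin.reduceEq, reduceIte]; norm_num)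
    have a1_23 := mid_flow_one pi1 (2, 3) res23 (by simp only [pi1, Fin.reduceEq, reduceIte]; norm_num)
    have a2_23 := mid_flow_negs pi2 (2, 3) res23 (by simp only [pi2, Fin.reduceEq, reduceIte]; norm_num)
    have a3_23 := mid_flow_one pi3 (2, 3) res23 (by simp only [pi3, Fin.reduceEq, reduceIte]; norm_num)
    have a1_34 := mid_flow_negs pi1 (3, 4) res34 (by simp only [pi1, Fin.reduceEq, reduceIte]; norm_num)
    have a2_34 := mid_flow_one pi2 (3, 4) res34 (by simp only [pi2, Fin.reduceEq, reduceIte]; norm_num)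
    have a3_34 := mid_flow_one pi3 (3, 4) res34 (by simp only [pi3, Fin.reduceEq, reduceIte]; norm_num)
    intro v
    have hstb : ∀ w : Fin 6, stBalance (2 - Real.sqrt 2) w =
        if w = 0 then 2 - Real.sqrt 2 else if w = 5 then -(2 - Real.sqrt 2) else 0 :=
      fun w => rfl
    fin_cases v
    · show balance pathArcs exResistance pi1 0 + balance pathArcs exResistance pi2 0 +
          balance pathArcs exResistance pi3 0 = stBalance (2 - Real.sqrt 2) 0
      rw [bal0, bal0, bal0, a1_01, a2_01, a3_01, hstb]; norm_num; ring
    · show balance pathArcs exResistance pi1 1 + balance pathArcs exResistance pi2 1 +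
          balance pathArcs exResistance pi3 1 = stBalance (2 - Real.sqrt 2) 1
      rw [bal1, bal1, bal1, a1_01, a2_01, a3_01, a1_12, a2_12, a3_12, hstb]
      simp only [Fin.reduceEq, reduceIte]; ring
    · show balance pathArcs exResistance pi1 2 + balance pathArcs exResistance pi2 2 +
          balance pathArcs exResistance pi3 2 = stBalance (2 - Real.sqrt 2) 2
      rw [bal2, bal2, bal2, a1_12, a2_12, a3_12, a1_23, a2_23, a3_23, hstb]
      simp only [Fin.reduceEq, reduceIte]; ring
    · show balance pathArcs exResistance pi1 3 + balance pathArcs exResistance pi2 3 +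
          balance pathArcs exResistance pi3 3 = stBalance (2 - Real.sqrt 2) 3
      rw [bal3, bal3, bal3, a1_23, a2_23, a3_23, a1_34, a2_34, a3_34, hstb]
      simp only [Fin.reduceEq, reduceIte]; ring
    · show balance pathArcs exResistance pi1 4 + balance pathArcs exResistance pi2 4 +
          balance pathArcs exResistance pi3 4 = stBalance (2 - Real.sqrt 2) 4
      rw [bal4, bal4, bal4, a1_34, a2_34, a3_34, a1_45, a2_45, a3_45, hstb]
      simp only [Fin.reduceEq, reduceIte]; ring
    · show balance pathArcs exResistance pi1 5 + balance pathArcs exResistance pi2 5 +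
          balance pathArcs exResistance pi3 5 = stBalance (2 - Real.sqrt 2) 5
      rw [bal5, bal5, bal5, a1_45, a2_45, a3_45, hstb]
      simp only [Fin.reduceEq, reduceIte]; ring

lemma gap : 2 - Real.sqrt 2 > 3 * Real.sqrt ((76 - 48 * Real.sqrt 2) / 219) := by
  have hq2 : (3 * Real.sqrt ((76 - 48 * Real.sqrt 2) / 219)) ^ 2 =
      36 / (57 + 36 * Real.sqrt 2) := by
    rw [mul_pow, Q_sq]; ring
  have h1 : (2 - Real.sqrt 2) ^ 2 > 36 / (57 + 36 * Real.sqrt 2) := by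
    rw [gt_iff_lt, div_lt_iff₀ T_pos]
    nlinarith [s2_sq, s2_lt]
  nlinarith [Q_nonneg, s2_lt, s2_nonneg, hq2]

lemma balance_congr (π π' : Fin 6 → ℝ)
    (h : ∀ a ∈ pathArcs, inducedFlow exResistance π a = inducedFlow exResistance π' a)
    (v : Fin 6) :
    balance pathArcs exResistance π v = balance pathArcs exResistance π' v := by
  unfold balance
  congr 1 <;> exact Finset.sum_congr rfl fun a ha => h a (Finset.mem_of_mem_filter a ha)

/-- Example 2 of the paper: (i) the maximum feasible stationary gas s-t-flow has value
`√((76 − 48√2)/219)`; (ii) there is a feasible 3-stage gas s-t-flow of value `2 − √2`,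
which strictly exceeds three times the maximum stationary value; consequently, every
optimal 3-stage gas s-t-flow is instationary. -/
theorem instationary_max_flow_example :
    IsGreatest statValues (Real.sqrt ((76 - 48 * Real.sqrt 2) / 219)) ∧
      ((2 - Real.sqrt 2) ∈ threeStageValues ∧
        2 - Real.sqrt 2 > 3 * Real.sqrt ((76 - 48 * Real.sqrt 2) / 219)) ∧
      (∀ π₁ π₂ π₃ : Fin 6 → ℝ, feasible π₁ → feasible π₂ → feasible π₃ →
        ∀ q : ℝ,
          (∀ v : Fin 6,
            balance pathArcs exResistance π₁ v + balance pathArcs exResistance π₂ v +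
              balance pathArcs exResistance π₃ v = stBalance q v) →
          (∀ q' ∈ threeStageValues, q' ≤ q) →
          ¬(∀ a ∈ pathArcs,
              inducedFlow exResistance π₁ a = inducedFlow exResistance π₂ a ∧
                inducedFlow exResistance π₂ a = inducedFlow exResistance π₃ a)) := by
  refine ⟨⟨stat_mem, stat_ub⟩, ⟨three_mem, gap⟩, ?_⟩
  intro π₁ π₂ π₃ h₁ h₂ h₃ q hbal hmax hflow
  have e12 : ∀ v, balance pathArcs exResistance π₁ v = balance pathArcs exResistance π₂ v :=
    balance_congr π₁ π₂ fun a ha => (hflow a ha).1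
  have e23 : ∀ v, balance pathArcs exResistance π₂ v = balance pathArcs exResistance π₃ v :=
    balance_congr π₂ π₃ fun a ha => (hflow a ha).2
  have hq3 : q / 3 ∈ statValues := by
    refine ⟨π₁, h₁, fun v => ?_⟩
    have := hbal v
    rw [← e12 v, ← e23 v, ← e12 v] at this
    simp only [stBalance] at this ⊢
    split_ifs at this ⊢ <;> linarith
  have hle : q / 3 ≤ Real.sqrt ((76 - 48 * Real.sqrt 2) / 219) := stat_ub _ hq3
  have hge : 2 - Real.sqrt 2 ≤ q := hmax _ three_mem
  have := gap
  linarith
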